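/- For every integer p ≥ 1, V_{-p}(−2i) = (−1)^p (−2p + 1 + 2p·i), where i is the imaginary unit. -/
import Mathlib

open Finset

/-- `Vpos k z` is the polynomial `V_k(z) = Σ_{j=0}^{2k} C(k+⌊j/2⌋, j) z^j`. -/
noncomputable def Vpos (k : ℕ) (z : ℂ) : ℂ :=
  ∑ j ∈ Finset.range (2 * k + 1), (Nat.choose (k + j / 2) j : ℂ) * z ^ j

/-- `Vneg k z` is the polynomial `V_{-k}(z) = 1 + Σ_{j=1}^{2k-1} C(k+⌊(j-1)/2⌋, j) z^j`. -/
noncomputable def Vneg (k : ℕ) (z : ℂ) : ℂ :=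
  1 + ∑ j ∈ Finset.Icc 1 (2 * k - 1), (Nat.choose (k + (j - 1) / 2) j : ℂ) * z ^ j

/-- Odd-index sum `A p = Σ_{m<p} C(p+m, 2m+1) (-4)^m`. -/
noncomputable def Aaux (p : ℕ) : ℂ :=
  ∑ m ∈ Finset.range p, (Nat.choose (p + m) (2 * m + 1) : ℂ) * (-4) ^ m

/-- Even-index sum `Bq q = Σ_{m<q+1} C(q+m, 2m) (-4)^m`. -/
noncomputable def Baux (q : ℕ) : ℂ :=
  ∑ m ∈ Finset.range (q + 1), (Nat.choose (q + m) (2 * m) : ℂ) * (-4) ^ m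

noncomputable def Eaux (q : ℕ) : ℂ :=
  ∑ m ∈ Finset.range q, (Nat.choose (q + 1 + m) (2 * m + 2) : ℂ) * (-4) ^ m

lemma sum_parity (n : ℕ) (f : ℕ → ℂ) :
    ∑ j ∈ Finset.range (2 * n), f j = ∑ m ∈ Finset.range n, (f (2 * m) + f (2 * m + 1)) := by
  induction n with
  | zero => simp
  | succ n ih =>
      have h : 2 * (n + 1) = 2 * n + 1 + 1 := by ring
      rw [h, Finset.sum_range_succ, Finset.sum_range_succ, ih, Finset.sum_range_succ]
      ring

lemma Baux_eq (q : ℕ) : Baux q = 1 - 4 * Eaux q := by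
  rw [Baux, Finset.sum_range_succ']
  have h : ∀ k ∈ Finset.range q,
      ((Nat.choose (q + (k + 1)) (2 * (k + 1)) : ℂ)) * (-4) ^ (k + 1) =
        -4 * ((Nat.choose (q + 1 + k) (2 * k + 2) : ℂ) * (-4) ^ k) := by
    intro k _
    have h1 : q + (k + 1) = q + 1 + k := by ring
    have h2 : 2 * (k + 1) = 2 * k + 2 := by ring
    rw [h1, h2]; ring
  rw [Finset.sum_congr rfl h, ← Finset.mul_sum, Eaux]
  simp
  ring

lemma Aaux_succ (p : ℕ) : Aaux (p + 1) = Aaux p + Baux p := by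
  rw [Aaux]
  have h : ∀ m ∈ Finset.range (p + 1),
      ((Nat.choose (p + 1 + m) (2 * m + 1) : ℂ)) * (-4) ^ m =
        (Nat.choose (p + m) (2 * m + 1) : ℂ) * (-4) ^ m
          + (Nat.choose (p + m) (2 * m) : ℂ) * (-4) ^ m := by
    intro m _
    have h1 : p + 1 + m = (p + m) + 1 := by ring
    rw [h1, Nat.choose_succ_succ]
    push_cast; ring
  rw [Finset.sum_congr rfl h, Finset.sum_add_distrib, Finset.sum_range_succ
    (fun m => (Nat.choose (p + m) (2 * m + 1) : ℂ) * (-4) ^ m)]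
  have hz : Nat.choose (p + p) (2 * p + 1) = 0 := Nat.choose_eq_zero_of_lt (by omega)
  rw [hz]
  simp [Aaux, Baux]

lemma Eaux_succ (q : ℕ) : Eaux (q + 1) = Eaux q + Aaux (q + 1) := by
  rw [Eaux]
  have h : ∀ m ∈ Finset.range (q + 1),
      ((Nat.choose (q + 1 + 1 + m) (2 * m + 2) : ℂ)) * (-4) ^ m =
        (Nat.choose (q + 1 + m) (2 * m + 2) : ℂ) * (-4) ^ m
          + (Nat.choose (q + 1 + m) (2 * m + 1) : ℂ) * (-4) ^ m := by
    intro m _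
    have h1 : q + 1 + 1 + m = (q + 1 + m) + 1 := by ring
    have h2 : 2 * m + 2 = (2 * m + 1) + 1 := rfl
    rw [h1, h2, Nat.choose_succ_succ]
    push_cast; ring
  rw [Finset.sum_congr rfl h, Finset.sum_add_distrib, Finset.sum_range_succ
    (fun m => (Nat.choose (q + 1 + m) (2 * m + 2) : ℂ) * (-4) ^ m)]
  have hz : Nat.choose (q + 1 + q) (2 * q + 2) = 0 := Nat.choose_eq_zero_of_lt (by omega)
  rw [hz]
  simp [Eaux, Aaux]

lemma Baux_succ (q : ℕ) : Baux (q + 1) = Baux q - 4 * Aaux (q + 1) := by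
  rw [Baux_eq, Baux_eq, Eaux_succ]; ring

lemma closed (p : ℕ) : Aaux p = (-1) ^ (p + 1) * p ∧ Baux p = (-1) ^ p * (2 * p + 1) := by
  induction p with
  | zero => constructor <;> simp [Aaux, Baux]
  | succ p ih =>
      obtain ⟨hA, hB⟩ := ih
      constructor
      · rw [Aaux_succ, hA, hB]; push_cast; ring
      · rw [Baux_succ, Aaux_succ, hA, hB]; push_cast; ring

theorem stmt_7 (p : ℕ) (hp : 1 ≤ p) :
    Vneg p (-(2 * Complex.I)) =
      (-1) ^ p * (-(2 * p) + 1 + 2 * p * Complex.I) := by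
  obtain ⟨q, rfl⟩ : ∃ q, p = q + 1 := ⟨p - 1, by omega⟩
  set z : ℂ := -(2 * Complex.I) with hzdef
  have hz2 : z ^ 2 = (-4 : ℂ) := by
    rw [show z ^ 2 = 4 * Complex.I ^ 2 by rw [hzdef]; ring, Complex.I_sq]; norm_num
  rw [Vneg]
  have hm : 2 * (q + 1) - 1 = 2 * q + 1 := by omega
  rw [hm]
  set f : ℕ → ℂ := fun j => (Nat.choose (q + 1 + (j - 1) / 2) j : ℂ) * z ^ j with hf
  have step1 : ∑ j ∈ Finset.Icc 1 (2 * q + 1), f j = ∑ j ∈ Finset.Icc 1 (2 * q + 2), f j := by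
    rw [show 2 * q + 2 = (2 * q + 1) + 1 from rfl,
      Finset.sum_Icc_succ_top (by omega : 1 ≤ 2 * q + 1 + 1) f]
    have : f (2 * q + 1 + 1) = 0 := by
      rw [hf]
      have h1 : (2 * q + 1 + 1 - 1) / 2 = q := by omega
      have h2 : Nat.choose (q + 1 + q) (2 * q + 1 + 1) = 0 :=
        Nat.choose_eq_zero_of_lt (by omega)
      have h1b : (2 * q + 1) / 2 = q := by omega
      simp [h1, h1b, h2]
    rw [this, add_zero]
  have step2 : ∑ j ∈ Finset.Icc 1 (2 * q + 2), f j
      = ∑ i ∈ Finset.range (2 * (q + 1)), f (1 + i) := by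
    rw [← Finset.Ico_add_one_right_eq_Icc, Finset.sum_Ico_eq_sum_range]
    congr 1
  have step3 : ∑ i ∈ Finset.range (2 * (q + 1)), f (1 + i)
      = ∑ m ∈ Finset.range (q + 1), (f (1 + 2 * m) + f (1 + (2 * m + 1))) :=
    sum_parity (q + 1) (fun i => f (1 + i))
  have step4 : ∀ m ∈ Finset.range (q + 1),
      f (1 + 2 * m) + f (1 + (2 * m + 1)) =
        (Nat.choose (q + 1 + m) (2 * m + 1) : ℂ) * (-4) ^ m * z
          + (Nat.choose (q + 1 + m) (2 * m + 2) : ℂ) * (-4) ^ m * (-4) := by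
    intro m _
    rw [hf]
    have e1 : (1 + 2 * m - 1) / 2 = m := by omega
    have e2 : (1 + (2 * m + 1) - 1) / 2 = m := by omega
    have p1 : z ^ (1 + 2 * m) = (-4 : ℂ) ^ m * z := by
      rw [show 1 + 2 * m = 2 * m + 1 from by omega, pow_succ, pow_mul, hz2]
    have p2 : z ^ (1 + (2 * m + 1)) = (-4 : ℂ) ^ m * (-4) := by
      rw [show 1 + (2 * m + 1) = 2 * m + 2 from by omega,
        show 2 * m + 2 = 2 * (m + 1) from by omega, pow_mul, hz2, pow_succ]
    simp only [e1, e2, p1, p2]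
    have e3 : 1 + 2 * m = 2 * m + 1 := by omega
    have e4 : 1 + (2 * m + 1) = 2 * m + 2 := by omega
    rw [e3, e4]
    ring
  rw [step1, step2, step3, Finset.sum_congr rfl step4, Finset.sum_add_distrib,
    ← Finset.sum_mul, ← Finset.sum_mul]
  have hA : ∑ m ∈ Finset.range (q + 1), (Nat.choose (q + 1 + m) (2 * m + 1) : ℂ) * (-4) ^ m
      = Aaux (q + 1) := by
    rw [Aaux]
  have hE : ∑ m ∈ Finset.range (q + 1), (Nat.choose (q + 1 + m) (2 * m + 2) : ℂ) * (-4) ^ m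
      = Eaux q := by
    rw [Finset.sum_range_succ]
    have hz0 : Nat.choose (q + 1 + q) (2 * q + 2) = 0 := Nat.choose_eq_zero_of_lt (by omega)
    rw [hz0, Eaux]
    simp
  rw [hA, hE]
  have hcA := (closed (q + 1)).1
  have hE' : (-1 : ℂ) ^ q * (2 * q + 1) = 1 - 4 * Eaux q := by
    rw [← (closed q).2]; exact Baux_eq q
  rw [hcA, hzdef]
  push_cast
  linear_combination -hE'
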